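/- arXiv:1312.5832 — 4 statements merged into one kernel-verified Lean document; each statement's English description precedes it below -/
import Mathlib

section
/- Let (A,m) be a Cohen–Macaulay local ring with infinite residue field and let x ∈ m be an A-superficial element. Then (m^{n+1} : x) = m^n for all n ≥ 0 if and only if the initial form x* of x is a nonzerodivisor on the associated graded ring G(A). -/
open IsLocalRing

universe u

noncomputable section

/-- The Jacobson radical of the zero ideal.  For a (not necessarily local) commutative
ring this plays the role of the maximal ideal `𝔪` of a local ring: when `A` is local it
coincides with `IsLocalRing.maximalIdeal A`. -/
def mIdl (A : Type u) [CommRing A] : Ideal A := (⊥ : Ideal A).jacobson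

/-- The Loewy length `ℓℓ(M) = min { i ≥ 0 ∣ 𝔪^i M = 0 }`, valued in `ℕ∞`
(`⊤` if no power of the maximal ideal kills `M`). -/
def loewyLength (A : Type u) [CommRing A] (M : Type u) [AddCommGroup M] [Module A M] : ℕ∞ :=
  sInf {e : ℕ∞ | ∃ i : ℕ, e = i ∧ (mIdl A ^ i) • (⊤ : Submodule A M) = ⊥}

/-- The length of a module: the Krull dimension of its lattice of submodules,
i.e. the supremum of lengths of chains of submodules. -/
def moduleLength (A : Type u) [CommRing A] (M : Type u) [AddCommGroup M] [Module A M] :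
    WithBot ℕ∞ :=
  Order.krullDim (Submodule A M)

/-- The embedding dimension of a local ring: `dim_k 𝔪/𝔪²`. -/
def embDim (A : Type u) [CommRing A] [IsLocalRing A] : ℕ :=
  Module.finrank (ResidueField A) (CotangentSpace A)

/-- A local ring is regular if its Krull dimension equals its embedding dimension. -/
def IsRegularLocal (A : Type u) [CommRing A] [IsLocalRing A] : Prop :=
  ringKrullDim A = ((embDim A : ℕ∞) : WithBot ℕ∞)

open Classical in
/-- The order of a local ring `A`:  `1` if `A` is regular, and otherwise
`min { n ∣ length (A/𝔪^{n+1}) < (n + c).choose n }` where `c` is the embedding dimension. -/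
def ringOrder (A : Type u) [CommRing A] [IsLocalRing A] : ℕ :=
  if IsRegularLocal A then 1
  else sInf {n : ℕ | moduleLength A (A ⧸ (mIdl A) ^ (n + 1)) <
    (((n + embDim A).choose n : ℕ∞) : WithBot ℕ∞)}

/-- `x ∈ 𝔪` is `A`-superficial if there is `c > 0` with
`(𝔪^{n+1} : x) ∩ 𝔪^c = 𝔪^n` for all `n ≫ 0`. -/
def IsSuperficial (A : Type u) [CommRing A] (x : A) : Prop :=
  x ∈ mIdl A ∧ ∃ c : ℕ, 0 < c ∧ ∃ N : ℕ, ∀ n ≥ N,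
    (mIdl A ^ (n + 1)).colon (Ideal.span {x}) ⊓ mIdl A ^ c = mIdl A ^ n

/-- `ϑ(A,x) = inf { n ∣ (𝔪^{n+1} : x) ≠ 𝔪^n }` (`⊤` if there is no such `n`). -/
def theta (A : Type u) [CommRing A] (x : A) : ℕ∞ :=
  sInf {e : ℕ∞ | ∃ n : ℕ, e = n ∧ (mIdl A ^ (n + 1)).colon (Ideal.span {x}) ≠ mIdl A ^ n}

/-- `x₁, …, x_r` is an `A`-superficial sequence if `x_i` is superficial for
`A/(x₁, …, x_{i-1})` for each `i`. -/
def IsSuperficialSeq : (A : Type u) → [inst : CommRing A] → List A → Prop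
  | _, _, [] => True
  | A, _, x :: xs =>
      IsSuperficial A x ∧
        IsSuperficialSeq (A ⧸ Ideal.span {x})
          (xs.map (Ideal.Quotient.mk (Ideal.span {x})))
termination_by A inst xs => xs.length
decreasing_by simp [List.length_map]

/-- `ϑ(A, x₁…x_d) = inf { ϑ(A_i, x_{i+1}) ∣ 0 ≤ i ≤ d-1 }` where `A_i = A/(x₁,…,x_i)`. -/
def thetaSeq : (A : Type u) → [inst : CommRing A] → List A → ℕ∞
  | _, _, [] => ⊤
  | A, _, x :: xs =>
      min (theta A x)
        (thetaSeq (A ⧸ Ideal.span {x})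
          (xs.map (Ideal.Quotient.mk (Ideal.span {x}))))
termination_by A inst xs => xs.length
decreasing_by simp [List.length_map]

/-- `ϑ(A) = sup { ϑ(A, 𝐱) ∣ 𝐱 a maximal superficial sequence }`. -/
def thetaSup (A : Type u) [CommRing A] : ℕ∞ :=
  sSup {e : ℕ∞ | ∃ xs : List A, IsSuperficialSeq A xs ∧
    (xs.length : WithBot ℕ∞) = ringKrullDim A ∧ e = thetaSeq A xs}

/-- A local ring is Cohen–Macaulay iff it admits a regular sequence, contained in the
maximal ideal, whose length is the Krull dimension. -/
def IsCohenMacaulayLocal (A : Type u) [CommRing A] : Prop :=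
  ∃ rs : List A, (∀ r ∈ rs, r ∈ mIdl A) ∧ RingTheory.Sequence.IsRegular A rs ∧
    (rs.length : WithBot ℕ∞) = ringKrullDim A

/-- A finitely generated module is maximal Cohen–Macaulay iff it admits a weakly regular
sequence, contained in the maximal ideal, whose length is the Krull dimension of the ring. -/
def IsMaximalCohenMacaulay (A : Type u) [CommRing A] (M : Type u) [AddCommGroup M]
    [Module A M] : Prop :=
  Module.Finite A M ∧ ∃ rs : List A, (∀ r ∈ rs, r ∈ mIdl A) ∧
    RingTheory.Sequence.IsWeaklyRegular M rs ∧ (rs.length : WithBot ℕ∞) = ringKrullDim A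

/-- `M` has a free direct summand (a direct summand isomorphic to `A`). -/
def HasFreeSummand (A : Type u) [CommRing A] (M : Type u) [AddCommGroup M] [Module A M] :
    Prop :=
  ∃ N P : Submodule A M, IsCompl N P ∧ Nonempty (N ≃ₗ[A] A)

/-- Auslander's delta invariant: the smallest `n` such that there is an epimorphism
`X ⊕ A^n → M` with `X` maximal Cohen–Macaulay having no free direct summand. -/
def deltaInv (A : Type u) [CommRing A] (M : Type u) [AddCommGroup M] [Module A M] : ℕ :=
  sInf {n : ℕ | ∃ X : ModuleCat.{u} A, IsMaximalCohenMacaulay A X ∧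
    ¬ HasFreeSummand A X ∧ ∃ f : (X × (Fin n → A)) →ₗ[A] M, Function.Surjective f}

/-- Auslander's index: `index(A) = min { n ∣ δ_A(A/𝔪^n) ≥ 1 }`. -/
def AuslanderIndex (A : Type u) [CommRing A] : ℕ :=
  sInf {n : ℕ | 1 ≤ deltaInv A (A ⧸ (mIdl A) ^ n)}

/-- `A` has finite injective dimension as a module over itself: there is a finite
injective resolution `0 → A → I⁰ → I¹ → ⋯ → Iⁿ → 0`. -/
def FiniteSelfInjDim (A : Type u) [CommRing A] : Prop :=
  ∃ (n : ℕ) (I : ℕ → ModuleCat.{u} A) (ε : A →ₗ[A] I 0) (d : ∀ i, I i →ₗ[A] I (i + 1)),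
    (∀ i, Module.Injective A (I i)) ∧
    Function.Injective ε ∧
    LinearMap.range ε = LinearMap.ker (d 0) ∧
    (∀ i, LinearMap.range (d i) = LinearMap.ker (d (i + 1))) ∧
    (∀ i, n < i → Subsingleton (I i))

/-- `M` admits a projective resolution `0 → P_n → ⋯ → P₀ → M → 0` of length at most `n`. -/
def HasProjResLengthLE (A : Type u) [CommRing A] (M : Type u) [AddCommGroup M] [Module A M]
    (n : ℕ) : Prop :=
  ∃ (P : ℕ → ModuleCat.{u} A) (ε : P 0 →ₗ[A] M) (d : ∀ i, P (i + 1) →ₗ[A] P i),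
    (∀ i, Module.Projective A (P i)) ∧
    Function.Surjective ε ∧
    LinearMap.ker ε = LinearMap.range (d 0) ∧
    (∀ i, LinearMap.ker (d i) = LinearMap.range (d (i + 1))) ∧
    (∀ i, n < i → Subsingleton (P i))

/-- `M` has finite projective dimension. -/
def FiniteProjDim (A : Type u) [CommRing A] (M : Type u) [AddCommGroup M] [Module A M] :
    Prop :=
  ∃ n : ℕ, HasProjResLengthLE A M n

/-- The projective dimension of `M`, valued in `ℕ∞`. -/
def projDim (A : Type u) [CommRing A] (M : Type u) [AddCommGroup M] [Module A M] : ℕ∞ :=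
  sInf {e : ℕ∞ | ∃ n : ℕ, e = n ∧ HasProjResLengthLE A M n}

/-- The order of the element `x`: the largest `n` with `x ∈ 𝔪^n`. -/
def elemOrder (A : Type u) [CommRing A] (x : A) : ℕ := sSup {n : ℕ | x ∈ mIdl A ^ n}

/-- The initial form `x*` of `x` (of degree `t = elemOrder A x`) is a nonzerodivisor on the
associated graded ring `G(A) = ⊕ 𝔪^n/𝔪^{n+1}`:  since the annihilator of a homogeneous
element is homogeneous, this says exactly that `x*` annihilates no nonzero homogeneous
element, i.e. for `a ∈ 𝔪^n`, `x·a ∈ 𝔪^{n+t+1}` forces `a ∈ 𝔪^{n+1}`. -/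
def InitialFormRegular (A : Type u) [CommRing A] (x : A) : Prop :=
  ∀ (n : ℕ) (a : A), a ∈ mIdl A ^ n →
    x * a ∈ mIdl A ^ (n + elemOrder A x + 1) → a ∈ mIdl A ^ (n + 1)

/-- The initial form of `x` is a *linear* form (`x ∈ 𝔪 \ 𝔪²`) which is a nonzerodivisor
on the associated graded ring `G(A)`. -/
def LinearInitialFormRegular (A : Type u) [CommRing A] (x : A) : Prop :=
  x ∈ mIdl A ∧ x ∉ mIdl A ^ 2 ∧
    ∀ (n : ℕ) (a : A), a ∈ mIdl A ^ n →
      x * a ∈ mIdl A ^ (n + 2) → a ∈ mIdl A ^ (n + 1)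

/-- The initial forms `x₁*, …, x_r*` (all of degree one) form a regular sequence on the
associated graded ring `G(A)`; since `G(A)/(x₁*) ≅ G(A/(x₁))` once `x₁*` is a
nonzerodivisor, this is expressed by the natural recursion through the quotient rings. -/
def GradedLinRegSeq : (A : Type u) → [inst : CommRing A] → List A → Prop
  | _, _, [] => True
  | A, _, x :: xs =>
      LinearInitialFormRegular A x ∧
        GradedLinRegSeq (A ⧸ Ideal.span {x})
          (xs.map (Ideal.Quotient.mk (Ideal.span {x})))
termination_by A inst xs => xs.length
decreasing_by simp [List.length_map]

/-- The associated graded ring `G(A)` of a local ring with infinite residue field is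
Cohen–Macaulay iff some sequence of `dim A` linear forms is a `G(A)`-regular sequence. -/
def AssocGradedIsCM (A : Type u) [CommRing A] : Prop :=
  ∃ ys : List A, (ys.length : WithBot ℕ∞) = ringKrullDim A ∧ GradedLinRegSeq A ys

lemma one_not_mem_mIdl (A : Type u) [CommRing A] [IsLocalRing A] : (1 : A) ∉ mIdl A := by
  rw [mIdl, IsLocalRing.jacobson_eq_maximalIdeal ⊥ bot_ne_top]
  intro h
  exact (IsLocalRing.maximalIdeal.isMaximal A).ne_top ((Ideal.eq_top_iff_one _).mpr h)

lemma elemOrder_eq_one (A : Type u) [CommRing A] [IsLocalRing A] {x : A}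
    (h1 : x ∈ mIdl A) (h2 : x ∉ mIdl A ^ 2) : elemOrder A x = 1 := by
  have hsub : {n : ℕ | x ∈ mIdl A ^ n} ⊆ {n | n ≤ 1} := by
    intro n hn
    by_contra hle
    simp only [Set.mem_setOf_eq, not_le] at hle
    exact h2 (Ideal.pow_le_pow_right hle hn)
  refine le_antisymm (csSup_le ⟨0, by simp⟩ fun n hn => hsub hn) ?_
  exact le_csSup ⟨1, fun n hn => hsub hn⟩ (by simpa using h1)

/-- Let `(A,𝔪)` be a Cohen–Macaulay local ring with infinite residue field and `x ∈ 𝔪`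
an `A`-superficial element.  Then `(𝔪^{n+1} : x) = 𝔪^n` for all `n ≥ 0` iff the initial
form `x*` is a nonzerodivisor on the associated graded ring `G(A)`. -/
theorem colon_eq_pow_iff_initialFormRegular (A : Type u) [CommRing A] [IsNoetherianRing A]
    [IsLocalRing A] [Infinite (ResidueField A)] (hCM : IsCohenMacaulayLocal A)
    (x : A) (hx : IsSuperficial A x) :
    (∀ n : ℕ, (mIdl A ^ (n + 1)).colon (Ideal.span {x}) = mIdl A ^ n) ↔
      InitialFormRegular A x := by
  classical
  obtain ⟨hxm, c, hc, N, hsup⟩ := hx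
  by_cases hx2 : x ∈ mIdl A ^ 2
  · -- degenerate case: both sides are false
    -- first, some power of the maximal ideal is zero
    set p := max N c with hp
    have hple : mIdl A ^ p ≤ mIdl A ^ (p + 1) := by
      have h1 : mIdl A ^ p ≤ (mIdl A ^ (p + 1 + 1)).colon (Ideal.span {x}) := by
        intro a ha
        rw [Ideal.mem_colon_span_singleton]
        have : a * x ∈ mIdl A ^ p * mIdl A ^ 2 := Ideal.mul_mem_mul ha hx2
        rwa [← pow_add] at this
      have h2 : mIdl A ^ p ≤ mIdl A ^ c :=
        Ideal.pow_le_pow_right (le_max_right N c)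
      have := hsup (p + 1) (le_trans (le_max_left N c) (Nat.le_succ_of_le le_rfl))
      rw [← this]
      exact le_inf h1 h2
    have hbot : mIdl A ^ p = ⊥ := by
      refine Submodule.eq_bot_of_le_smul_of_le_jacobson_bot (mIdl A) _
        (IsNoetherian.noetherian _) ?_ ?_
      · rw [Ideal.smul_eq_mul, mul_comm, ← pow_succ]
        exact hple
      · rw [mIdl]
    have hex : ∃ k : ℕ, mIdl A ^ k = ⊥ := ⟨p, hbot⟩
    have hkbot : mIdl A ^ (Nat.find hex) = ⊥ := Nat.find_spec hex
    have hk0 : Nat.find hex ≠ 0 := by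
      intro h
      rw [h, pow_zero, Ideal.one_eq_top] at hkbot
      exact one_ne_zero ((Submodule.mem_bot A).mp (hkbot ▸ Submodule.mem_top (x := (1:A))))
    obtain ⟨k', hkk⟩ := Nat.exists_eq_succ_of_ne_zero hk0
    rw [hkk] at hkbot
    have hk'ne : mIdl A ^ k' ≠ ⊥ := Nat.find_min hex (by omega)
    obtain ⟨a, ha, ha0⟩ := Submodule.exists_mem_ne_zero_of_ne_bot hk'ne
    refine iff_of_false ?_ ?_
    · intro H
      have h1 : (1 : A) ∈ (mIdl A ^ (1 + 1)).colon (Ideal.span {x}) := by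
        rw [Ideal.mem_colon_span_singleton, one_mul]
        exact hx2
      rw [H 1, pow_one] at h1
      exact one_not_mem_mIdl A h1
    · intro reg
      have hxa : x * a = 0 := by
        have : x * a ∈ mIdl A * mIdl A ^ k' := Ideal.mul_mem_mul hxm ha
        rw [mul_comm, ← pow_succ] at this
        rwa [hkbot, Submodule.mem_bot] at this
      have := reg k' a ha (by rw [hxa]; exact zero_mem _)
      rw [hkbot, Submodule.mem_bot] at this
      exact ha0 this
  · -- main case: x ∉ 𝔪²
    have ht : elemOrder A x = 1 := elemOrder_eq_one A hxm hx2
    constructor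
    · intro H n a ha hxa
      rw [ht] at hxa
      have : a ∈ (mIdl A ^ (n + 1 + 1)).colon (Ideal.span {x}) := by
        rw [Ideal.mem_colon_span_singleton, mul_comm]
        exact hxa
      rwa [H (n + 1)] at this
    · intro reg n
      apply le_antisymm
      · intro a ha
        rw [Ideal.mem_colon_span_singleton] at ha
        have key : ∀ j, j ≤ n → a ∈ mIdl A ^ j := by
          intro j
          induction j with
          | zero => intro _; rw [pow_zero, Ideal.one_eq_top]; exact Submodule.mem_top
          | succ j ih =>
            intro hj
            have haj := ih (Nat.le_of_succ_le hj)
            refine reg j a haj ?_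
            rw [ht, mul_comm]
            exact Ideal.pow_le_pow_right (by omega) ha
        exact key n le_rfl
      · intro a ha
        rw [Ideal.mem_colon_span_singleton]
        have : a * x ∈ mIdl A ^ n * mIdl A := Ideal.mul_mem_mul ha hxm
        rwa [← pow_succ] at this

end
end

section
/- Let (A,m) be a d-dimensional Cohen–Macaulay local ring with infinite residue field and let x = x_1,…,x_d be a maximal A-superficial sequence. Assume the associated graded ring G(A) is not Cohen–Macaulay. Then for every n ≤ ϑ(A,x), the ideal m^n is not contained in (x_1,…,x_d). -/
open IsLocalRing

universe u

noncomputable section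

/-!
Suppose `𝔪^n ⊆ (x₁, …, x_d)`. By induction on `d`, the initial forms of the `xᵢ` then form a
`G(A)`-regular sequence, so `G(A)` would be Cohen–Macaulay. As `A` has depth `d`, the superficial
element `x₁` is a nonzerodivisor and `A/(x₁)` has depth `d - 1` (Rees), so the induction applies
to `A/(x₁)`; it remains to show `(𝔪^{j+1} : x₁) = 𝔪^j` for all `j`. For `j < n ≤ ϑ` this is the
definition of `ϑ`. If `d = 1`, then `𝔪^n ⊆ (x₁)` gives `𝔪^{j+1} ⊆ x₁𝔪^j` for `j ≥ n - 1`.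
If `d ≥ 2`, the initial form of `x₂` is regular on `G(A/(x₁))` and the Sally machine lifts this:
the equality holds for `j ≫ 0` by superficiality and Artin–Rees, and descends in `j` by Krull's
intersection theorem.
-/

section JacobsonRadical

variable {B : Type u} [CommRing B]

lemma mIdl_ne_top [Nontrivial B] : mIdl B ≠ ⊤ :=
  Ideal.jacobson_eq_top_iff.not.mpr bot_ne_top

lemma jacobson_eq_mIdl {I : Ideal B} (hI : I ≤ mIdl B) : I.jacobson = mIdl B :=
  le_antisymm ((Ideal.jacobson_mono hI).trans_eq Ideal.jacobson_idem) (Ideal.jacobson_mono bot_le)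

lemma map_mIdl_pow_quotient {I : Ideal B} (hI : I ≤ mIdl B) (i : ℕ) :
    (mIdl B ^ i).map (Ideal.Quotient.mk I) = mIdl (B ⧸ I) ^ i := by
  rw [Ideal.map_pow, ← jacobson_eq_mIdl hI,
    Ideal.map_jacobson_of_surjective Ideal.Quotient.mk_surjective (by rw [Ideal.mk_ker]),
    Ideal.map_quotient_self]
  rfl

lemma mk_mem_mIdl_pow_iff {I : Ideal B} (hI : I ≤ mIdl B) {b : B} {i : ℕ} :
    Ideal.Quotient.mk I b ∈ mIdl (B ⧸ I) ^ i ↔ b ∈ mIdl B ^ i ⊔ I := by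
  rw [← map_mIdl_pow_quotient hI, ← Ideal.mem_comap,
    Ideal.comap_map_of_surjective _ Ideal.Quotient.mk_surjective, ← RingHom.ker_eq_comap_bot,
    Ideal.mk_ker]

/-- Krull's intersection theorem: every ideal is closed in the `mIdl`-adic topology. -/
lemma mem_of_forall_mem_sup_mIdl_pow [IsNoetherianRing B] {J : Ideal B} {u : B}
    (h : ∀ s : ℕ, u ∈ J ⊔ mIdl B ^ s) : u ∈ J := by
  rw [← Submodule.Quotient.mk_eq_zero, ← Submodule.mem_bot B,
    ← (mIdl B).iInf_pow_smul_eq_bot_of_le_jacobson (M := B ⧸ J) le_rfl, Submodule.mem_iInf]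
  intro s
  obtain ⟨v, hv, b, hb, rfl⟩ := Submodule.mem_sup.mp (h s)
  rw [Submodule.Quotient.mk_add, (Submodule.Quotient.mk_eq_zero J).mpr hv, zero_add,
    ← mul_one b, ← smul_eq_mul, Submodule.Quotient.mk_smul]
  exact Submodule.smul_mem_smul hb Submodule.mem_top

end JacobsonRadical

section Colon

variable {B : Type u} [CommRing B]

lemma mIdl_pow_le_colon {y : B} (hy : y ∈ mIdl B) (j : ℕ) :
    mIdl B ^ j ≤ (mIdl B ^ (j + 1)).colon (Ideal.span {y}) := fun u hu => by
  rw [Ideal.mem_colon_span_singleton, pow_succ]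
  exact Ideal.mul_mem_mul hu hy

lemma colon_eq_pow_of_lt_theta {y : B} {n j : ℕ} (hn : (n : ℕ∞) ≤ theta B y) (hj : j < n) :
    (mIdl B ^ (j + 1)).colon (Ideal.span {y}) = mIdl B ^ j := by
  by_contra hne
  exact (hn.trans (sInf_le ⟨j, rfl, hne⟩)).not_gt (by exact_mod_cast hj)

lemma LinearInitialFormRegular.colon_eq_pow {y : B} (hy : LinearInitialFormRegular B y)
    (j : ℕ) : (mIdl B ^ (j + 1)).colon (Ideal.span {y}) = mIdl B ^ j := by
  refine le_antisymm (fun a ha => ?_) (mIdl_pow_le_colon hy.1 j)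
  rw [Ideal.mem_colon_span_singleton] at ha
  suffices ∀ i ≤ j, a ∈ mIdl B ^ i from this j le_rfl
  intro i hi
  induction i with
  | zero => simp
  | succ i ih =>
    exact hy.2.2 i a (ih (by omega)) (Ideal.pow_le_pow_right (by omega) (mul_comm a y ▸ ha))

lemma linearInitialFormRegular_of_colon_eq_pow [Nontrivial B] {y : B} (hy : y ∈ mIdl B)
    (h : ∀ j, (mIdl B ^ (j + 1)).colon (Ideal.span {y}) = mIdl B ^ j) :
    LinearInitialFormRegular B y := by
  refine ⟨hy, fun hy2 => mIdl_ne_top ((Ideal.eq_top_iff_one (mIdl B)).mpr ?_),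
    fun j a _ ha => ?_⟩
  · rw [← pow_one (mIdl B), ← h 1, Ideal.mem_colon_span_singleton, one_mul]
    exact hy2
  · rw [← h (j + 1), Ideal.mem_colon_span_singleton, mul_comm]
    exact ha

lemma mem_pow_of_pow_mul_mem {y g : B} {k i : ℕ}
    (hcol : ∀ l, k ≤ l → l < k + i → (mIdl B ^ (l + 1)).colon (Ideal.span {y}) ≤ mIdl B ^ l)
    (hg : y ^ i * g ∈ mIdl B ^ (k + i)) : g ∈ mIdl B ^ k := by
  induction i with
  | zero => simpa using hg
  | succ i ih =>
    refine ih (fun l hl hl' => hcol l hl (by omega)) (hcol (k + i) (by omega) (by omega) ?_)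
    rw [Ideal.mem_colon_span_singleton, mul_right_comm, ← pow_succ]
    exact hg

end Colon

section Superficial

variable {B : Type u} [CommRing B] [IsNoetherianRing B]

lemma IsSuperficial.isSMulRegular {y : B} (hy : IsSuperficial B y) {r : B} (hr : r ∈ mIdl B)
    (hreg : IsSMulRegular B r) : IsSMulRegular B y := by
  obtain ⟨-, c, -, N, hN⟩ := hy
  refine isSMulRegular_iff_right_eq_zero_of_smul.mpr fun a ha => ?_
  have hmem : ∀ j, a * r ^ c ∈ mIdl B ^ j := fun j => by
    refine Ideal.pow_le_pow_right (Nat.le_add_right j N) ?_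
    rw [← hN (j + N) (Nat.le_add_left N j)]
    refine Submodule.mem_inf.mpr ⟨?_, Ideal.mul_mem_left _ a (Ideal.pow_mem_pow hr c)⟩
    rw [Ideal.mem_colon_span_singleton, mul_right_comm, mul_comm a y, ← smul_eq_mul y a, ha,
      zero_mul]
    exact zero_mem _
  have h0 : a * r ^ c ∈ (⊥ : Ideal B) :=
    mem_of_forall_mem_sup_mIdl_pow fun s => Ideal.mem_sup_right (hmem s)
  exact (hreg.pow c).right_eq_zero_of_smul (by rw [smul_eq_mul, mul_comm]; exact h0)

/-- Artin–Rees turns the approximate equality `(𝔪^{j+1} : y) ∩ 𝔪^c = 𝔪^j` into an exact one. -/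
lemma IsSuperficial.exists_colon_eq_pow {y : B} (hy : IsSuperficial B y)
    (hreg : IsSMulRegular B y) :
    ∃ N, ∀ j ≥ N, (mIdl B ^ (j + 1)).colon (Ideal.span {y}) = mIdl B ^ j := by
  obtain ⟨hym, c, -, N, hN⟩ := hy
  obtain ⟨k, hk⟩ := (mIdl B).exists_pow_inf_eq_pow_smul (M := B) (Ideal.span {y})
  refine ⟨N + k + c, fun j hj => le_antisymm (fun a ha => ?_) (mIdl_pow_le_colon hym j)⟩
  rw [← hN j (by omega)]
  refine Submodule.mem_inf.mpr ⟨ha, ?_⟩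
  rw [Ideal.mem_colon_span_singleton] at ha
  have hAR := hk (j + 1) (by omega)
  simp only [Ideal.smul_eq_mul, Ideal.mul_top] at hAR
  have hay : a * y ∈ mIdl B ^ (j + 1 - k) * Ideal.span {y} := by
    refine Ideal.mul_mono_right (inf_le_right (a := mIdl B ^ k)) ?_
    rw [← hAR]
    exact ⟨ha, Ideal.mem_span_singleton'.mpr ⟨a, rfl⟩⟩
  obtain ⟨b, hb, hyb⟩ := Ideal.mem_span_singleton_mul.mp (mul_comm (Ideal.span {y}) _ ▸ hay)
  have hba : b = a := hreg (show y * b = y * a by rw [hyb, mul_comm])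
  exact Ideal.pow_le_pow_right (by omega) (hba ▸ hb)

end Superficial

section SallyMachine

variable {B : Type u} [CommRing B] [IsNoetherianRing B]

/-- Peeling off `y` with the equalities above level `j`, and then `z` in `B/(y)`, shows that
`a·y ∈ 𝔪^{j+1}` forces `a ∈ 𝔪^j + y^s B` for every `s`. -/
lemma colon_le_pow_of_forall_gt {y z : B} (hy : y ∈ mIdl B)
    (hz : LinearInitialFormRegular (B ⧸ Ideal.span {y}) (Ideal.Quotient.mk _ z)) {j : ℕ}
    (hj : ∀ l, j < l → (mIdl B ^ (l + 1)).colon (Ideal.span {y}) ≤ mIdl B ^ l) :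
    (mIdl B ^ (j + 1)).colon (Ideal.span {y}) ≤ mIdl B ^ j := by
  have hyI : Ideal.span {y} ≤ mIdl B := Ideal.span_singleton_le_iff_mem _ |>.mpr hy
  have hzm : z ∈ mIdl B := by
    simpa [sup_eq_left.mpr hyI] using
      (mk_mem_mIdl_pow_iff hyI (i := 1)).mp (by simpa using hz.1)
  have hstep : ∀ s b, y ^ (s + 1) * b ∈ mIdl B ^ (j + 1) →
      b ∈ mIdl B ^ (j - s) ⊔ Ideal.span {y} := by
    intro s b hb
    have hzb : z ^ (s + 1) * b ∈ mIdl B ^ (j + 1) := by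
      refine mem_pow_of_pow_mul_mem (i := s + 1) (fun l hl _ => hj l (by omega)) ?_
      rw [mul_left_comm, add_comm (j + 1), pow_add]
      exact Ideal.mul_mem_mul (Ideal.pow_mem_pow hzm _) hb
    rw [← mk_mem_mIdl_pow_iff hyI]
    rcases le_or_gt s j with hsj | hjs
    · refine mem_pow_of_pow_mul_mem (fun l _ _ => (hz.colon_eq_pow l).le) (i := s + 1) ?_
      rw [show j - s + (s + 1) = j + 1 by omega, ← map_pow, ← map_mul]
      exact (mk_mem_mIdl_pow_iff hyI).mpr (Ideal.mem_sup_left hzb)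
    · simp [show j - s = 0 by omega]
  intro a ha
  rw [Ideal.mem_colon_span_singleton] at ha
  have hiter : ∀ s, ∃ v ∈ mIdl B ^ j, ∃ b, a = v + y ^ s * b ∧
      y ^ (s + 1) * b ∈ mIdl B ^ (j + 1) := by
    intro s
    induction s with
    | zero => exact ⟨0, zero_mem _, a, by simp, by simpa [mul_comm] using ha⟩
    | succ s ih =>
      obtain ⟨v, hv, b, rfl, hb⟩ := ih
      obtain ⟨w, hw, t, ht, rfl⟩ := Submodule.mem_sup.mp (hstep s b hb)
      obtain ⟨h, rfl⟩ := Ideal.mem_span_singleton'.mp ht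
      have hyw : ∀ i, y ^ (s + i) * w ∈ mIdl B ^ (j + i) := fun i => by
        have := Ideal.mul_mem_mul (Ideal.pow_mem_pow hy (s + i)) hw
        rw [← pow_add] at this
        exact Ideal.pow_le_pow_right (by omega) this
      refine ⟨v + y ^ s * w, add_mem hv (by simpa using hyw 0), h, by ring, ?_⟩
      have := sub_mem hb (hyw 1)
      ring_nf at this ⊢
      exact this
  refine mem_of_forall_mem_sup_mIdl_pow fun s => ?_
  obtain ⟨v, hv, b, rfl, -⟩ := hiter s
  exact Submodule.add_mem_sup hv (Ideal.mul_mem_right _ _ (Ideal.pow_mem_pow hy s))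

lemma colon_eq_pow_of_quotient {y z : B} (hy : IsSuperficial B y) (hreg : IsSMulRegular B y)
    (hz : LinearInitialFormRegular (B ⧸ Ideal.span {y}) (Ideal.Quotient.mk _ z)) (j : ℕ) :
    (mIdl B ^ (j + 1)).colon (Ideal.span {y}) = mIdl B ^ j := by
  obtain ⟨N, hN⟩ := hy.exists_colon_eq_pow hreg
  have hdesc : ∀ q j, N ≤ j + q → (mIdl B ^ (j + 1)).colon (Ideal.span {y}) ≤ mIdl B ^ j := by
    intro q
    induction q with
    | zero => exact fun j hj => (hN j hj).le
    | succ q ih => exact fun j hj => colon_le_pow_of_forall_gt hy.1 hz fun l hl => ih l (by omega)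
  exact le_antisymm (hdesc N j (by omega)) (mIdl_pow_le_colon hy.1 j)

end SallyMachine

lemma colon_le_pow_of_pow_succ_le_span {B : Type u} [CommRing B] {y : B}
    (hreg : IsSMulRegular B y) {n : ℕ} (hle : mIdl B ^ (n + 1) ≤ Ideal.span {y})
    (hn : (mIdl B ^ (n + 1)).colon (Ideal.span {y}) ≤ mIdl B ^ n) {j : ℕ} (hj : n ≤ j) :
    (mIdl B ^ (j + 1)).colon (Ideal.span {y}) ≤ mIdl B ^ j := by
  have hbase : mIdl B ^ (n + 1) ≤ Ideal.span {y} * mIdl B ^ n := fun u hu => by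
    obtain ⟨b, rfl⟩ := Ideal.mem_span_singleton'.mp (hle hu)
    exact Ideal.mem_span_singleton_mul.mpr
      ⟨b, hn (Ideal.mem_colon_span_singleton.mpr hu), mul_comm _ _⟩
  have hpow : mIdl B ^ (j + 1) ≤ Ideal.span {y} * mIdl B ^ j := calc
    mIdl B ^ (j + 1) = mIdl B ^ (n + 1) * mIdl B ^ (j - n) := by
      rw [← pow_add, show n + 1 + (j - n) = j + 1 by omega]
    _ ≤ Ideal.span {y} * mIdl B ^ n * mIdl B ^ (j - n) := Ideal.mul_mono_left hbase
    _ = Ideal.span {y} * mIdl B ^ j := by rw [mul_assoc, ← pow_add, Nat.add_sub_cancel' hj]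
  intro a ha
  obtain ⟨w, hw, hyw⟩ :=
    Ideal.mem_span_singleton_mul.mp (hpow (Ideal.mem_colon_span_singleton.mp ha))
  have hwa : w = a := hreg (show y * w = y * a by rw [hyw, mul_comm])
  exact hwa ▸ hw

lemma colon_eq_pow_of_pow_le_span {B : Type u} [CommRing B] [Nontrivial B] {y : B}
    (hy : y ∈ mIdl B) (hreg : IsSMulRegular B y) {n : ℕ} (hθ : (n : ℕ∞) ≤ theta B y)
    (hle : mIdl B ^ n ≤ Ideal.span {y}) (j : ℕ) :
    (mIdl B ^ (j + 1)).colon (Ideal.span {y}) = mIdl B ^ j := by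
  obtain _ | n := n
  · rw [pow_zero, Ideal.one_eq_top] at hle
    exact absurd (top_le_iff.mp (hle.trans (Ideal.span_singleton_le_iff_mem _ |>.mpr hy)))
      mIdl_ne_top
  rcases lt_or_ge j n with hj | hj
  · exact colon_eq_pow_of_lt_theta hθ (by omega)
  · exact le_antisymm (colon_le_pow_of_pow_succ_le_span hreg hle
      (colon_eq_pow_of_lt_theta hθ (lt_add_one n)).le hj) (mIdl_pow_le_colon hy j)

section Depth

open RingTheory.Sequence CategoryTheory Abelian

/-- `depth B ≥ k`, the depth being taken along the Jacobson radical. -/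
def HasWeaklyRegularSeq (B : Type u) [CommRing B] (k : ℕ) : Prop :=
  ∃ rs : List B, rs.length = k ∧ (∀ r ∈ rs, r ∈ mIdl B) ∧ IsWeaklyRegular B rs

variable {B : Type u} [CommRing B]

lemma mIdl_smul_top_lt {M : Type*} [AddCommGroup M] [Module B M] [Nontrivial M]
    [Module.Finite B M] : mIdl B • (⊤ : Submodule B M) < ⊤ :=
  (Submodule.top_ne_ideal_smul_of_le_jacobson_annihilator
    (Ideal.jacobson_mono bot_le)).symm.lt_top

/-- Rees: vanishing of `Ext^i(B/𝔪, -)` for `i < k + 1` passes to `Ext^i(B/𝔪, B/xB)` for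
`i < k` through the long exact sequence of `0 → B → B → B/xB → 0`. -/
lemma exists_isRegular_quotSMulTop [IsNoetherianRing B] {k : ℕ} {rs : List B}
    (hlen : rs.length = k + 1) (hmem : ∀ r ∈ rs, r ∈ mIdl B) (hrs : IsRegular B rs)
    {x : B} (hx : x ∈ mIdl B) (hreg : IsSMulRegular B x) :
    ∃ rs' : List B, rs'.length = k ∧ (∀ r ∈ rs', r ∈ mIdl B) ∧
      IsRegular (QuotSMulTop x B) rs' := by
  let N := ModuleCat.of B (B ⧸ mIdl B)
  have hsupp : Module.support B N = PrimeSpectrum.zeroLocus (mIdl B) := by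
    rw [Module.support_eq_zeroLocus, Ideal.annihilator_quotient]
  have : Nontrivial B := hrs.nontrivial
  have hext := ModuleCat.subsingleton_ext_of_exists_isRegular (mIdl B) N hsupp.le
    (ModuleCat.of B B) mIdl_smul_top_lt rs hmem hrs
  have : Nontrivial (QuotSMulTop x B) := Submodule.Quotient.nontrivial_iff.mpr
    (Submodule.top_ne_pointwise_smul_of_mem_jacobson_annihilator
      (Ideal.jacobson_mono bot_le hx)).symm
  refine ModuleCat.exists_isRegular_of_exists_subsingleton_ext (mIdl B) k
    (ModuleCat.of B (QuotSMulTop x B)) mIdl_smul_top_lt N hsupp fun i hi => ?_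
  have zero1 := AddCommGrpCat.isZero_of_iff_subsingleton.mpr (hext i (by omega))
  have zero2 := AddCommGrpCat.isZero_of_iff_subsingleton.mpr (hext (i + 1) (by omega))
  exact AddCommGrpCat.subsingleton_of_isZero <| ShortComplex.Exact.isZero_of_both_zeros
    ((Ext.covariant_sequence_exact₃' N
      (IsSMulRegular.smulShortComplex_shortExact (M := ModuleCat.of B B) hreg)) i (i + 1) rfl)
    (zero1.eq_zero_of_src _) (zero2.eq_zero_of_tgt _)

lemma HasWeaklyRegularSeq.quotient [IsNoetherianRing B] [Nontrivial B] {k : ℕ}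
    (h : HasWeaklyRegularSeq B (k + 1)) {x : B} (hx : x ∈ mIdl B) (hreg : IsSMulRegular B x) :
    HasWeaklyRegularSeq (B ⧸ Ideal.span {x}) k := by
  obtain ⟨rs, hlen, hmem, hrs⟩ := h
  have hrs' : IsRegular B rs := (isRegular_iff_isWeaklyRegular_of_subset_jacobson_annihilator
    fun r hr => by rw [Module.annihilator_eq_bot.mpr inferInstance]; exact hmem r hr).mpr hrs
  obtain ⟨rs', hlen', hmem', hreg'⟩ := exists_isRegular_quotSMulTop hlen hmem hrs' hx hreg
  have e : QuotSMulTop x B ≃ₗ[B] B ⧸ Ideal.span {x} := Submodule.quotEquivOfEq _ _ <| by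
    rw [← Submodule.ideal_span_singleton_smul, Ideal.smul_eq_mul, Ideal.mul_top]
  have hxI : Ideal.span {x} ≤ mIdl B := Ideal.span_singleton_le_iff_mem _ |>.mpr hx
  refine ⟨rs'.map (Ideal.Quotient.mk _), by simpa using hlen', ?_, ?_⟩
  · simp only [List.mem_map]
    rintro _ ⟨r, hr, rfl⟩
    simpa using (mk_mem_mIdl_pow_iff hxI (i := 1)).mpr
      (by simpa using Ideal.mem_sup_left (hmem' r hr))
  · rw [← Ideal.Quotient.algebraMap_eq, isWeaklyRegular_map_algebraMap_iff]
    exact (e.isWeaklyRegular_congr rs').mp hreg'.toIsWeaklyRegular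

end Depth

lemma map_ofList_cons_quotient {B : Type u} [CommRing B] (y : B) (t : List B) :
    (Ideal.ofList (y :: t)).map (Ideal.Quotient.mk (Ideal.span {y})) =
      Ideal.ofList (t.map (Ideal.Quotient.mk (Ideal.span {y}))) := by
  rw [Ideal.map_ofList, List.map_cons, Ideal.ofList_cons,
    Ideal.Quotient.eq_zero_iff_mem.mpr (Ideal.mem_span_singleton_self y),
    Ideal.span_singleton_zero, bot_sup_eq]

theorem gradedLinRegSeq_of_pow_le_ofList {n : ℕ} (k : ℕ) :
    ∀ {B : Type u} [CommRing B] [IsNoetherianRing B] [Nontrivial B] {ys : List B},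
      ys.length = k → HasWeaklyRegularSeq B k → IsSuperficialSeq B ys →
      (n : ℕ∞) ≤ thetaSeq B ys → mIdl B ^ n ≤ Ideal.ofList ys → GradedLinRegSeq B ys := by
  induction k with
  | zero =>
    intro B _ _ _ ys hlen _ _ _ _
    rw [List.length_eq_zero_iff.mp hlen, GradedLinRegSeq]
    trivial
  | succ k ih =>
    intro B _ _ _ ys hlen hdepth hsup hθ hle
    obtain _ | ⟨y, t⟩ := ys
    · simp at hlen
    rw [IsSuperficialSeq] at hsup
    rw [thetaSeq, le_min_iff] at hθ
    obtain ⟨hy, hsup'⟩ := hsup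
    have hyI : Ideal.span {y} ≤ mIdl B := Ideal.span_singleton_le_iff_mem _ |>.mpr hy.1
    have : Nontrivial (B ⧸ Ideal.span {y}) :=
      Ideal.Quotient.nontrivial_iff.mpr (ne_top_of_le_ne_top mIdl_ne_top hyI)
    have hreg : IsSMulRegular B y := by
      obtain ⟨_ | ⟨r, rs⟩, hlen', hmem, hrs⟩ := hdepth
      · simp at hlen'
      exact hy.isSMulRegular (hmem r List.mem_cons_self)
        ((RingTheory.Sequence.isWeaklyRegular_cons_iff B r rs).mp hrs).1
    have htail : GradedLinRegSeq (B ⧸ Ideal.span {y}) (t.map (Ideal.Quotient.mk _)) := by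
      refine ih (by simpa using hlen) (hdepth.quotient hy.1 hreg) hsup' hθ.2 ?_
      rw [← map_mIdl_pow_quotient hyI, ← map_ofList_cons_quotient]
      exact Ideal.map_mono hle
    have hcolon : ∀ j, (mIdl B ^ (j + 1)).colon (Ideal.span {y}) = mIdl B ^ j := by
      obtain _ | ⟨z, t⟩ := t
      · exact colon_eq_pow_of_pow_le_span hy.1 hreg hθ.1 (Ideal.ofList_singleton y ▸ hle)
      · rw [List.map_cons, GradedLinRegSeq] at htail
        exact colon_eq_pow_of_quotient hy hreg htail.1
    rw [GradedLinRegSeq]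
    exact ⟨linearInitialFormRegular_of_colon_eq_pow hy.1 hcolon, htail⟩

theorem pow_maximalIdeal_not_le_span_general (A : Type u) [CommRing A] [IsNoetherianRing A]
    [IsLocalRing A] (hCM : IsCohenMacaulayLocal A)
    (d : ℕ) (hd : ringKrullDim A = d)
    (xs : List A) (hlen : xs.length = d) (hsup : IsSuperficialSeq A xs)
    (hnotCM : ¬ AssocGradedIsCM A) (n : ℕ) (hn : (n : ℕ∞) ≤ thetaSeq A xs) :
    ¬ (mIdl A ^ n ≤ Ideal.span {a : A | a ∈ xs}) := by
  intro hle
  obtain ⟨rs, hrs_mem, hrs_reg, hrs_len⟩ := hCM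
  have hdepth : HasWeaklyRegularSeq A xs.length :=
    ⟨rs, by rw [hlen]; exact_mod_cast hrs_len.trans hd, hrs_mem, hrs_reg.toIsWeaklyRegular⟩
  exact hnotCM
    ⟨xs, by rw [hlen, hd], gradedLinRegSeq_of_pow_le_ofList _ rfl hdepth hsup hn hle⟩

/-- **Crucial lemma.** Let `(A,𝔪)` be a `d`-dimensional Cohen–Macaulay local ring with
infinite residue field and `𝐱 = x₁,…,x_d` a maximal `A`-superficial sequence.  Assume
`G(A)` is not Cohen–Macaulay.  Then for every `n ≤ ϑ(A,𝐱)` we have `𝔪^n ⊄ (𝐱)`. -/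
theorem pow_maximalIdeal_not_le_span (A : Type u) [CommRing A] [IsNoetherianRing A]
    [IsLocalRing A] [Infinite (ResidueField A)] (hCM : IsCohenMacaulayLocal A)
    (d : ℕ) (hd : ringKrullDim A = d)
    (xs : List A) (hlen : xs.length = d) (hsup : IsSuperficialSeq A xs)
    (hnotCM : ¬ AssocGradedIsCM A) (n : ℕ) (hn : (n : ℕ∞) ≤ thetaSeq A xs) :
    ¬ (mIdl A ^ n ≤ Ideal.span {a : A | a ∈ xs}) :=
  pow_maximalIdeal_not_le_span_general A hCM d hd xs hlen hsup hnotCM n hn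

end
end

section
/- Let (A,m) be a Noetherian local ring and s an integer. Suppose x ∈ m \ m^2 is a nonzerodivisor on A and the map m^{i−1}/m^i → m^i/m^{i+1} induced by multiplication by x is injective for 1 ≤ i ≤ s. Then A/m^s is an epimorphic image of the ideal (m^s, x), i.e., there is a surjective A-module homomorphism (m^s, x) → A/m^s. -/
open IsLocalRing

universe u

noncomputable section

set_option maxHeartbeats 1000000 in
/-- **Ding's lemma, part (1).**  Let `(A,𝔪)` be a Noetherian local ring, `s` an integer,
and `x ∈ 𝔪 \\ 𝔪²` a nonzerodivisor on `A` such that multiplication by `x` induces an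
injection `𝔪^{i-1}/𝔪^i → 𝔪^i/𝔪^{i+1}` for `1 ≤ i ≤ s`.  Then `A/𝔪^s` is an epimorphic
image of the ideal `(𝔪^s, x)`. -/
theorem ding_epimorphic_image (A : Type u) [CommRing A] [IsNoetherianRing A]
    [IsLocalRing A] (s : ℕ) (x : A) (hx : x ∈ mIdl A) (hx2 : x ∉ mIdl A ^ 2)
    (hreg : x ∈ nonZeroDivisors A)
    (hinj : ∀ i : ℕ, 1 ≤ i → i ≤ s → ∀ a ∈ mIdl A ^ (i - 1),
      x * a ∈ mIdl A ^ (i + 1) → a ∈ mIdl A ^ i) :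
    ∃ f : ↥(mIdl A ^ s ⊔ Ideal.span {x}) →ₗ[A] (A ⧸ mIdl A ^ s),
      Function.Surjective f := by
  have hm : mIdl A = maximalIdeal A := IsLocalRing.jacobson_eq_maximalIdeal ⊥ bot_ne_top
  rw [hm] at hx hx2 hinj ⊢
  rcases Nat.eq_zero_or_pos s with hs | hs
  · subst hs
    haveI hsub : Subsingleton (A ⧸ maximalIdeal A ^ 0) := by
      rw [pow_zero, Ideal.one_eq_top]
      exact Submodule.Quotient.subsingleton_iff.mpr rfl
    exact ⟨0, fun y => ⟨0, Subsingleton.elim _ _⟩⟩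
  -- the colon ideal computation: `x*b ∈ 𝔪^{j+1}` forces `b ∈ 𝔪^j` for `j ≤ s`
  have hcolon : ∀ j, j ≤ s → ∀ b : A, x * b ∈ maximalIdeal A ^ (j + 1) →
      b ∈ maximalIdeal A ^ j := by
    intro j
    induction j with
    | zero => intro _ b _; simp [Ideal.one_eq_top]
    | succ j ih =>
      intro hj b hb
      have hb' : x * b ∈ maximalIdeal A ^ (j + 1) :=
        Ideal.pow_le_pow_right (by omega) hb
      have hbj : b ∈ maximalIdeal A ^ j := ih (by omega) b hb'
      exact hinj (j + 1) (by omega) hj b hbj hb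
  have hs1 : s - 1 + 1 = s := Nat.succ_pred_eq_of_pos hs
  have hxmul : ∀ (n : ℕ) (c : A), c ∈ maximalIdeal A ^ n →
      x * c ∈ maximalIdeal A ^ (n + 1) := by
    intro n c hc
    rw [pow_succ']
    exact Ideal.mul_mem_mul hx hc
  -- the images of `𝔪^s` and `𝔪^{s-1}` in the quotients
  set V : Submodule A (A ⧸ maximalIdeal A ^ (s + 1)) :=
    Submodule.map (maximalIdeal A ^ (s + 1)).mkQ (maximalIdeal A ^ s) with hVdef
  set W : Submodule A (A ⧸ maximalIdeal A ^ s) :=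
    Submodule.map (maximalIdeal A ^ s).mkQ (maximalIdeal A ^ (s - 1)) with hWdef
  -- multiplication by x, from A/𝔪^s to A/𝔪^{s+1}
  have hkerφ : maximalIdeal A ^ s ≤ LinearMap.ker
      (((maximalIdeal A ^ (s + 1)).mkQ) ∘ₗ (x • (LinearMap.id : A →ₗ[A] A))) := by
    intro a ha
    simp only [LinearMap.mem_ker, LinearMap.comp_apply, LinearMap.smul_apply,
      LinearMap.id_apply, Submodule.mkQ_apply, Submodule.Quotient.mk_eq_zero, smul_eq_mul]
    exact hxmul s a ha
  set φ : (A ⧸ maximalIdeal A ^ s) →ₗ[A] (A ⧸ maximalIdeal A ^ (s + 1)) :=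
    Submodule.liftQ (maximalIdeal A ^ s) _ hkerφ with hφdef
  have hφ : ∀ a : A, φ (Submodule.Quotient.mk a) = Submodule.Quotient.mk (x * a) :=
    fun a => rfl
  have hWmap : ∀ w ∈ W, φ w ∈ V := by
    rintro w hw
    obtain ⟨c, hc, rfl⟩ := hw
    have : φ (Submodule.Quotient.mk c) = Submodule.Quotient.mk (x * c) := hφ c
    rw [Submodule.mkQ_apply, this]
    exact Submodule.mem_map_of_mem (by simpa [hs1] using hxmul (s - 1) c hc)
  set μ : W →ₗ[A] V := φ.restrict hWmap with hμdef
  have hμinj : Function.Injective μ := by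
    refine (injective_iff_map_eq_zero _).mpr ?_
    rintro ⟨w, hw⟩ h0
    obtain ⟨c, hc, rfl⟩ := hw
    have h1 : φ (Submodule.Quotient.mk c) = 0 := by
      have := congrArg (Subtype.val) h0
      simpa [hμdef, LinearMap.restrict_apply] using this
    rw [hφ c, Submodule.Quotient.mk_eq_zero] at h1
    have hcs : c ∈ maximalIdeal A ^ s := hcolon s le_rfl c h1
    refine Subtype.ext ?_
    show Submodule.Quotient.mk c = (0 : A ⧸ maximalIdeal A ^ s)
    exact (Submodule.Quotient.mk_eq_zero _).mpr hcs
  -- V and W are killed by 𝔪, hence are residue-field vector spaces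
  have hVtor : Module.IsTorsionBySet A V ((maximalIdeal A : Ideal A) : Set A) := by
    rintro ⟨v, hv⟩ ⟨r, hr⟩
    obtain ⟨b, hb, rfl⟩ := hv
    refine Subtype.ext ?_
    have : r • (Submodule.Quotient.mk b : A ⧸ maximalIdeal A ^ (s + 1)) =
        Submodule.Quotient.mk (r * b) := by
      rw [← Submodule.Quotient.mk_smul]; rfl
    show r • ((maximalIdeal A ^ (s + 1)).mkQ b) = 0
    rw [Submodule.mkQ_apply, this, Submodule.Quotient.mk_eq_zero]
    rw [pow_succ']
    exact Ideal.mul_mem_mul hr hb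
  have hWtor : Module.IsTorsionBySet A W ((maximalIdeal A : Ideal A) : Set A) := by
    rintro ⟨w, hw⟩ ⟨r, hr⟩
    obtain ⟨b, hb, rfl⟩ := hw
    refine Subtype.ext ?_
    have : r • (Submodule.Quotient.mk b : A ⧸ maximalIdeal A ^ s) =
        Submodule.Quotient.mk (r * b) := by
      rw [← Submodule.Quotient.mk_smul]; rfl
    show r • ((maximalIdeal A ^ s).mkQ b) = 0
    rw [Submodule.mkQ_apply, this, Submodule.Quotient.mk_eq_zero]
    have : r * b ∈ maximalIdeal A * maximalIdeal A ^ (s - 1) := Ideal.mul_mem_mul hr hb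
    rw [← pow_succ', hs1] at this
    exact this
  letI instV : Module (A ⧸ maximalIdeal A) V := hVtor.module
  letI instW : Module (A ⧸ maximalIdeal A) W := hWtor.module
  letI instF : Field (A ⧸ maximalIdeal A) := Ideal.Quotient.field (maximalIdeal A)
  set μk : W →ₗ[A ⧸ maximalIdeal A] V :=
    { toFun := fun w => μ w
      map_add' := fun w w' => μ.map_add w w'
      map_smul' := by
        intro r w
        obtain ⟨r, rfl⟩ := Ideal.Quotient.mk_surjective r
        simp only [RingHom.id_apply]
        rw [hVtor.mk_smul, hWtor.mk_smul]
        exact μ.map_smul r w } with hμkdef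
  have hμkinj : LinearMap.ker μk = ⊥ := by
    rw [LinearMap.ker_eq_bot]
    exact fun a b h => hμinj h
  obtain ⟨pk, hpk⟩ := μk.exists_leftInverse_of_injective hμkinj
  set p' : V →ₗ[A] W :=
    { toFun := fun v => pk v
      map_add' := fun v v' => pk.map_add v v'
      map_smul' := by
        intro r v
        simp only [RingHom.id_apply]
        have h := pk.map_smul (Ideal.Quotient.mk (maximalIdeal A) r) v
        rw [hVtor.mk_smul, hWtor.mk_smul] at h
        exact h } with hp'def
  have hcod : ∀ a : ↥(maximalIdeal A ^ s),
      ((maximalIdeal A ^ (s + 1)).mkQ ∘ₗ (maximalIdeal A ^ s).subtype) a ∈ V := fun a =>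
    Submodule.mem_map_of_mem a.2
  set ι : ↥(maximalIdeal A ^ s) →ₗ[A] V :=
    LinearMap.codRestrict V ((maximalIdeal A ^ (s + 1)).mkQ ∘ₗ (maximalIdeal A ^ s).subtype)
      hcod with hιdef
  set g : ↥(maximalIdeal A ^ s) →ₗ[A] (A ⧸ maximalIdeal A ^ s) :=
    W.subtype ∘ₗ p' ∘ₗ ι with hgdef
  have hgkey : ∀ (c : A) (hc : c ∈ maximalIdeal A ^ (s - 1)) (h2 : x * c ∈ maximalIdeal A ^ s),
      g ⟨x * c, h2⟩ = Submodule.Quotient.mk c := by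
    intro c hc h2
    have hwmem : (Submodule.Quotient.mk c : A ⧸ maximalIdeal A ^ s) ∈ W :=
      Submodule.mem_map_of_mem hc
    have hμw : μ ⟨Submodule.Quotient.mk c, hwmem⟩ = ι ⟨x * c, h2⟩ := by
      apply Subtype.ext
      show φ (Submodule.Quotient.mk c) = _
      rw [hφ c]
      rfl
    have hret : p' (ι ⟨x * c, h2⟩) = ⟨Submodule.Quotient.mk c, hwmem⟩ := by
      rw [← hμw]
      exact LinearMap.congr_fun hpk ⟨Submodule.Quotient.mk c, hwmem⟩
    show W.subtype (p' (ι ⟨x * c, h2⟩)) = _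
    rw [hret]
    rfl
  -- assemble the epimorphism
  set F : (↥(maximalIdeal A ^ s) × A) →ₗ[A] (A ⧸ maximalIdeal A ^ s) :=
    g ∘ₗ LinearMap.fst A (↥(maximalIdeal A ^ s)) A +
      (maximalIdeal A ^ s).mkQ ∘ₗ LinearMap.snd A (↥(maximalIdeal A ^ s)) A with hFdef
  set π : (↥(maximalIdeal A ^ s) × A) →ₗ[A] A :=
    (maximalIdeal A ^ s).subtype ∘ₗ LinearMap.fst A (↥(maximalIdeal A ^ s)) A +
      (LinearMap.toSpanSingleton A A x) ∘ₗ LinearMap.snd A (↥(maximalIdeal A ^ s)) A with hπdef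
  have hπ_apply : ∀ (a : ↥(maximalIdeal A ^ s)) (b : A), π (a, b) = (a : A) + b * x := by
    intro a b
    simp [hπdef, LinearMap.toSpanSingleton_apply, smul_eq_mul]
  have hrange : LinearMap.range π = maximalIdeal A ^ s ⊔ Ideal.span {x} := by
    apply le_antisymm
    · rintro _ ⟨⟨a, b⟩, rfl⟩
      rw [hπ_apply]
      exact Submodule.add_mem _ (Submodule.mem_sup_left a.2)
        (Submodule.mem_sup_right (Ideal.mul_mem_left _ b (Ideal.subset_span rfl)))
    · rw [sup_le_iff]
      constructor
      · intro a ha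
        exact ⟨(⟨a, ha⟩, 0), by rw [hπ_apply]; simp⟩
      · rw [Ideal.span_le]
        rintro y (rfl : y = x)
        exact ⟨(0, 1), by rw [hπ_apply]; simp⟩
  have hkerle : LinearMap.ker π ≤ LinearMap.ker F := by
    rintro ⟨a, b⟩ hab
    have hab' : (a : A) + b * x = 0 := by
      have := hab
      rw [LinearMap.mem_ker, hπ_apply] at this
      exact this
    have hxbmem : x * b ∈ maximalIdeal A ^ s := by
      have hxb : x * b = -(a : A) := by linear_combination hab'
      rw [hxb]
      exact neg_mem a.2
    have hb : b ∈ maximalIdeal A ^ (s - 1) := by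
      refine hcolon (s - 1) (by omega) b ?_
      rwa [hs1]
    have haeq : a = -(⟨x * b, hxbmem⟩ : ↥(maximalIdeal A ^ s)) := by
      apply Subtype.ext
      show (a : A) = -(x * b)
      linear_combination hab'
    rw [LinearMap.mem_ker]
    have hFab : F (a, b) = g a + Submodule.Quotient.mk b := by
      simp [hFdef]
    rw [hFab, haeq, map_neg, hgkey b hb hxbmem]
    exact neg_add_cancel _
  set Fbar : ((↥(maximalIdeal A ^ s) × A) ⧸ LinearMap.ker π) →ₗ[A] (A ⧸ maximalIdeal A ^ s) :=
    (LinearMap.ker π).liftQ F hkerle with hFbardef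
  set e := π.quotKerEquivRange with he
  set e2 : ↥(maximalIdeal A ^ s ⊔ Ideal.span {x}) ≃ₗ[A] ↥(LinearMap.range π) :=
    LinearEquiv.ofEq _ _ hrange.symm with he2
  refine ⟨Fbar ∘ₗ e.symm.toLinearMap ∘ₗ e2.toLinearMap, ?_⟩
  intro y
  obtain ⟨b, rfl⟩ := Submodule.mkQ_surjective (maximalIdeal A ^ s) y
  refine ⟨e2.symm (e (Submodule.Quotient.mk (0, b))), ?_⟩
  simp only [LinearMap.comp_apply, LinearEquiv.coe_coe, LinearEquiv.apply_symm_apply,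
    LinearEquiv.symm_apply_apply]
  have h1 : Fbar (Submodule.Quotient.mk (0, b)) = F (0, b) := by
    rw [hFbardef]
    exact Submodule.liftQ_apply _ _ _
  rw [h1, hFdef]
  simp

end
end

section
/- Let (A,m) be a Noetherian local ring and s an integer. Suppose x ∈ m \ m^2 is a nonzerodivisor on A and the map m^{i−1}/m^i → m^i/m^{i+1} induced by multiplication by x is injective for 1 ≤ i ≤ s. Then there is an A-module isomorphism (m^s, x)/x(m^s, x) ≅ A/(m^s, x) ⊕ (m^s, x)/(x). -/
open IsLocalRing

universe u

noncomputable section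

/-!
Put `I = (𝔪^s, x)`. By Zorn's lemma there is an ideal `C ⊆ 𝔪^s` with `𝔪^s ⊆ C + (x)` and
`C ∩ (x) ⊆ 𝔪^{s+1}`, so `I = C + (x)`. If `a x ∈ C` then `x a ∈ 𝔪^{s+1}`, and the injectivity
hypothesis, applied in degrees `1, …, s`, gives `a ∈ 𝔪^s ⊆ I`. Hence `a x + c ↦ a mod I` is a
well-defined `A`-linear map `F : I → A/I` with `F x = 1`, and `(F, mod (x)) : I → A/I × I/(x)` is
surjective with kernel `x I`.
-/

theorem Ideal.mem_pow_of_mul_mem_pow_succ {R : Type*} [CommSemiring R] {m : Ideal R} {x : R}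
    {n : ℕ} (h : ∀ i < n, ∀ a ∈ m ^ i, x * a ∈ m ^ (i + 2) → a ∈ m ^ (i + 1)) {a : R}
    (ha : x * a ∈ m ^ (n + 1)) : a ∈ m ^ n := by
  suffices ∀ j ≤ n, a ∈ m ^ j from this n le_rfl
  intro j hj
  induction j with
  | zero => simp
  | succ j ih => exact h j (by omega) a (ih (by omega)) (Ideal.pow_le_pow_right (by omega) ha)

theorem LinearMap.exists_comp_eq_of_surjective {R M N P : Type*} [Ring R]
    [AddCommGroup M] [AddCommGroup N] [AddCommGroup P] [Module R M] [Module R N] [Module R P]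
    {f : M →ₗ[R] N} (hf : Function.Surjective f) (g : M →ₗ[R] P) (hfg : ker f ≤ ker g) :
    ∃ h : N →ₗ[R] P, h ∘ₗ f = g :=
  ⟨(ker f).liftQ g hfg ∘ₗ (f.quotKerEquivOfSurjective hf).symm.toLinearMap, by
    ext y
    simp [quotKerEquivOfSurjective_symm_apply]⟩

theorem IsLocalRing.exists_le_sup_inf_le_smul {A M : Type*} [CommRing A] [IsLocalRing A]
    [AddCommGroup M] [Module A M] (N W : Submodule A M) :
    ∃ C ≤ N, N ≤ C ⊔ W ∧ C ⊓ W ≤ maximalIdeal A • N := by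
  set L := maximalIdeal A • N
  let S : Set (Submodule A M) := {C | L ≤ C ∧ C ≤ N ∧ C ⊓ W ≤ L}
  obtain ⟨C, -, hC⟩ : ∃ C, L ≤ C ∧ Maximal (· ∈ S) C := by
    refine zorn_le_nonempty₀ S (fun c hcS hc y hy => ?_) L
      ⟨le_rfl, Submodule.smul_le_right, inf_le_left⟩
    refine ⟨sSup c, ⟨(hcS hy).1.trans (le_sSup hy), sSup_le fun z hz => (hcS hz).2.1, ?_⟩,
      fun z hz => le_sSup hz⟩
    rw [inf_comm, hc.directedOn.inf_sSup_eq]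
    exact iSup₂_le fun z hz => inf_comm W z ▸ (hcS hz).2.2
  obtain ⟨hLC, hCN, hCW⟩ := hC.prop
  refine ⟨C, hCN, fun u hu => ?_, hCW⟩
  by_contra hu'
  suffices C ⊔ Submodule.span A {u} ∈ S from hu' <| Submodule.mem_sup_left <|
    hC.2 this le_sup_left (Submodule.mem_sup_right (Submodule.mem_span_singleton_self u))
  refine ⟨hLC.trans le_sup_left, sup_le hCN (Submodule.span_le.mpr (by simpa using hu)), ?_⟩
  rintro z ⟨hzCu, hzW⟩
  obtain ⟨c, hc, t, ht, rfl⟩ := Submodule.mem_sup.mp hzCu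
  obtain ⟨a, rfl⟩ := Submodule.mem_span_singleton.mp ht
  by_cases ha : a ∈ maximalIdeal A
  · exact hCW ⟨add_mem hc (hLC (Submodule.smul_mem_smul ha hu)), hzW⟩
  · exfalso
    obtain ⟨b, hb⟩ := (notMem_maximalIdeal.mp ha).exists_left_inv
    have hu_eq : u = b • ((c + a • u) - c) := by
      rw [add_sub_cancel_left, smul_smul, hb, one_smul]
    refine hu' (hu_eq ▸ Submodule.smul_mem _ b ?_)
    exact sub_mem (Submodule.mem_sup_right hzW) (Submodule.mem_sup_left hc)

theorem Ideal.exists_linearMap_quotient_apply_eq_one {A : Type*} [CommRing A] {I C : Ideal A}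
    (x : I) (hI : C ⊔ Ideal.span {(x : A)} = I) (hC : ∀ a : A, a * x ∈ C → a ∈ I) :
    ∃ F : I →ₗ[A] A ⧸ I, F x = 1 := by
  let ψ : (A × C) →ₗ[A] I :=
    (LinearMap.toSpanSingleton A I x).coprod (Submodule.inclusion (hI ▸ le_sup_left))
  have hψ : ∀ p, (ψ p : A) = p.1 * x + p.2 := fun p => by simp [ψ]
  have hψsurj : Function.Surjective ψ := by
    rintro ⟨y, hy⟩
    obtain ⟨c, hc, t, ht, rfl⟩ := Submodule.mem_sup.mp (hI ▸ hy)
    obtain ⟨a, rfl⟩ := Ideal.mem_span_singleton'.mp ht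
    exact ⟨(a, ⟨c, hc⟩), Subtype.ext (by rw [hψ, add_comm])⟩
  have hker : LinearMap.ker ψ ≤ LinearMap.ker (I.mkQ ∘ₗ LinearMap.fst A A C) := by
    rintro ⟨a, c⟩ hac
    have hax : a * x = -(c : A) :=
      eq_neg_of_add_eq_zero_left (by simpa [hψ] using congrArg Subtype.val hac)
    simpa [Ideal.Quotient.eq_zero_iff_mem] using hC a (hax ▸ neg_mem c.2)
  obtain ⟨F, hF⟩ := LinearMap.exists_comp_eq_of_surjective hψsurj _ hker
  refine ⟨F, ?_⟩
  have hx : ψ (1, 0) = x := Subtype.ext (by simp [hψ])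
  rw [← hx, ← LinearMap.comp_apply, hF]
  rfl

theorem Ideal.nonempty_quotient_span_mul_equiv_prod {A : Type*} [CommRing A] {I : Ideal A}
    (x : I) (F : I →ₗ[A] A ⧸ I) (hF : F x = 1) :
    Nonempty ((I ⧸ Submodule.comap I.subtype (Ideal.span {(x : A)} * I)) ≃ₗ[A]
      (A ⧸ I) × (I ⧸ Submodule.comap I.subtype (Ideal.span {(x : A)}))) := by
  set J := Submodule.comap I.subtype (Ideal.span {(x : A)})
  let Φ : I →ₗ[A] (A ⧸ I) × (I ⧸ J) := F.prod J.mkQ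
  have hFsmul : ∀ b : A, F (b • x) = Ideal.Quotient.mk I b := fun b => by
    rw [map_smul, hF, Algebra.smul_def, mul_one]; rfl
  have hΦ : ∀ y, Φ y = (F y, J.mkQ y) := fun _ => rfl
  have hker : LinearMap.ker Φ = Submodule.comap I.subtype (Ideal.span {(x : A)} * I) := by
    ext y
    simp only [LinearMap.mem_ker, hΦ, Prod.mk_eq_zero, Submodule.mkQ_apply,
      Submodule.Quotient.mk_eq_zero, Submodule.mem_comap, Submodule.subtype_apply, J,
      Ideal.mem_span_singleton_mul, Ideal.mem_span_singleton']
    constructor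
    · rintro ⟨hFy, a, hay⟩
      have hy : y = a • x := Subtype.ext hay.symm
      rw [hy, hFsmul, Ideal.Quotient.eq_zero_iff_mem] at hFy
      exact ⟨a, hFy, by rw [← hay, mul_comm]⟩
    · rintro ⟨a, ha, hay⟩
      have hy : y = a • x := Subtype.ext (by rw [← hay, mul_comm]; rfl)
      rw [hy, hFsmul, Ideal.Quotient.eq_zero_iff_mem]
      exact ⟨ha, a, rfl⟩
  have hΦsurj : Function.Surjective Φ := by
    rintro ⟨p, q⟩
    obtain ⟨y, rfl⟩ := J.mkQ_surjective q
    obtain ⟨b, hb⟩ := Ideal.Quotient.mk_surjective (p - F y)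
    have hxJ : J.mkQ x = 0 :=
      (Submodule.Quotient.mk_eq_zero J).mpr (Ideal.mem_span_singleton_self _)
    refine ⟨y + b • x, ?_⟩
    rw [hΦ, map_add, hFsmul, hb, map_add, map_smul, hxJ, smul_zero, add_zero, add_sub_cancel]
  exact ⟨(Submodule.quotEquivOfEq _ _ hker.symm).trans (Φ.quotKerEquivOfSurjective hΦsurj)⟩

theorem ding_decomposition_general (A : Type u) [CommRing A] [IsLocalRing A] (s : ℕ) (x : A)
    (hinj : ∀ i : ℕ, 1 ≤ i → i ≤ s → ∀ a ∈ mIdl A ^ (i - 1),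
      x * a ∈ mIdl A ^ (i + 1) → a ∈ mIdl A ^ i) :
    Nonempty
      ((↥(mIdl A ^ s ⊔ Ideal.span {x}) ⧸
          (Submodule.comap (mIdl A ^ s ⊔ Ideal.span {x}).subtype
            (Ideal.span {x} * (mIdl A ^ s ⊔ Ideal.span {x})))) ≃ₗ[A]
        ((A ⧸ (mIdl A ^ s ⊔ Ideal.span {x})) ×
          (↥(mIdl A ^ s ⊔ Ideal.span {x}) ⧸
            (Submodule.comap (mIdl A ^ s ⊔ Ideal.span {x}).subtype
              (Ideal.span {x} : Ideal A))))) := by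
  have hm : mIdl A = maximalIdeal A := jacobson_eq_maximalIdeal ⊥ bot_ne_top
  set I := mIdl A ^ s ⊔ Ideal.span {x}
  have hmul : ∀ a, x * a ∈ mIdl A ^ (s + 1) → a ∈ mIdl A ^ s := fun a =>
    Ideal.mem_pow_of_mul_mem_pow_succ fun i hi b hb =>
      hinj (i + 1) (by omega) hi b (by simpa using hb)
  obtain ⟨C, hCs, hsC, hCx⟩ := exists_le_sup_inf_le_smul (mIdl A ^ s) (Ideal.span {x})
  rw [← hm, Ideal.smul_eq_mul, ← pow_succ'] at hCx
  have hI : C ⊔ Ideal.span {x} = I :=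
    le_antisymm (sup_le_sup_right hCs _) (sup_le hsC le_sup_right)
  have hC : ∀ a, a * x ∈ C → a ∈ I := fun a hax =>
    Submodule.mem_sup_left <| hmul a <|
      mul_comm a x ▸ hCx ⟨hax, Ideal.mem_span_singleton'.mpr ⟨a, rfl⟩⟩
  obtain ⟨F, hF⟩ := Ideal.exists_linearMap_quotient_apply_eq_one
    ⟨x, Submodule.mem_sup_right (Ideal.mem_span_singleton_self x)⟩ hI hC
  -- elaborated without the expected type: unifying against it first times out
  exact (Ideal.nonempty_quotient_span_mul_equiv_prod _ F hF :)

/-- **Ding's lemma, part (2).**  Let `(A,𝔪)` be a Noetherian local ring, `s` an integer,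
and `x ∈ 𝔪 \\ 𝔪²` a nonzerodivisor on `A` such that multiplication by `x` induces an
injection `𝔪^{i-1}/𝔪^i → 𝔪^i/𝔪^{i+1}` for `1 ≤ i ≤ s`.  Then there is an `A`-module
isomorphism `(𝔪^s,x)/x(𝔪^s,x) ≅ A/(𝔪^s,x) ⊕ (𝔪^s,x)/(x)`. -/
theorem ding_decomposition (A : Type u) [CommRing A] [IsNoetherianRing A]
    [IsLocalRing A] (s : ℕ) (x : A) (hx : x ∈ mIdl A) (hx2 : x ∉ mIdl A ^ 2)
    (hreg : x ∈ nonZeroDivisors A)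
    (hinj : ∀ i : ℕ, 1 ≤ i → i ≤ s → ∀ a ∈ mIdl A ^ (i - 1),
      x * a ∈ mIdl A ^ (i + 1) → a ∈ mIdl A ^ i) :
    Nonempty
      ((↥(mIdl A ^ s ⊔ Ideal.span {x}) ⧸
          (Submodule.comap (mIdl A ^ s ⊔ Ideal.span {x}).subtype
            (Ideal.span {x} * (mIdl A ^ s ⊔ Ideal.span {x})))) ≃ₗ[A]
        ((A ⧸ (mIdl A ^ s ⊔ Ideal.span {x})) ×
          (↥(mIdl A ^ s ⊔ Ideal.span {x}) ⧸
            (Submodule.comap (mIdl A ^ s ⊔ Ideal.span {x}).subtype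
              (Ideal.span {x} : Ideal A))))) :=
  ding_decomposition_general A s x hinj
end
end
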